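/- If a graph G (with no isolated vertex) has two nonadjacent vertices u and v such that v is not a support vertex and N(u) ⊆ N(v), then G is not γ_t-critical. -/

import Mathlib

/-!
Let `S` be a minimum total dominating set of `G - v`; it exists because deleting a vertex that
is not a support vertex creates no isolated vertex. The vertex of `S` dominating `u` lies in
`N(u) ⊆ N(v)`, so `S` also dominates `v` and is a total dominating set of `G`. Hence
`γₜ(G) ≤ γₜ(G - v)`, and `v` witnesses that `G` is not `γₜ`-critical.
-/

open scoped Classical

namespace SimpleGraph

variable {V : Type*}

/-- A set `S` is a total dominating set if every vertex is adjacent to a vertex of `S`. -/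
def IsTotalDomSet (G : SimpleGraph V) (S : Set V) : Prop :=
  ∀ v : V, ∃ u ∈ S, G.Adj v u

/-- The total domination number: minimum cardinality of a total dominating set. -/
noncomputable def totalDomNum (G : SimpleGraph V) [Fintype V] : ℕ :=
  sInf {n : ℕ | ∃ S : Finset V, G.IsTotalDomSet ↑S ∧ S.card = n}

/-- The graph obtained by deleting the vertex `v`. -/
def deleteVert (G : SimpleGraph V) (v : V) : SimpleGraph {u : V // u ≠ v} :=
  G.induce {u : V | u ≠ v}

/-- A support vertex is a vertex adjacent to a leaf (a vertex of degree one). -/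
noncomputable def IsSupportVertex (G : SimpleGraph V) [Fintype V] (v : V) : Prop :=
  ∃ u : V, G.Adj v u ∧ G.degree u = 1

/-- `G` is total domination vertex critical: it has no isolated vertex and deleting any
vertex that is not a support vertex decreases the total domination number. -/
noncomputable def IsTotalDomCritical (G : SimpleGraph V) [Fintype V] : Prop :=
  (∀ v : V, 0 < G.degree v) ∧
  ∀ v : V, ¬ G.IsSupportVertex v →
    (G.deleteVert v).totalDomNum < G.totalDomNum

theorem totalDomNum_le_card [Fintype V] {G : SimpleGraph V} {S : Finset V}
    (hS : G.IsTotalDomSet ↑S) : G.totalDomNum ≤ S.card :=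
  Nat.sInf_le ⟨S, hS, rfl⟩

theorem exists_isTotalDomSet_card_eq_totalDomNum [Fintype V] {G : SimpleGraph V}
    (hG : ∀ x, ∃ y, G.Adj x y) : ∃ S : Finset V, G.IsTotalDomSet ↑S ∧ S.card = G.totalDomNum :=
  Nat.sInf_mem (s := {n | ∃ S : Finset V, G.IsTotalDomSet ↑S ∧ S.card = n})
    ⟨_, Finset.univ, fun x => (hG x).imp fun y hy => ⟨Finset.mem_univ y, hy⟩, rfl⟩

theorem exists_adj_deleteVert [Fintype V] {G : SimpleGraph V} {v : V}
    (hG : ∀ x, 0 < G.degree x) (hv : ¬ G.IsSupportVertex v) (x : {x : V // x ≠ v}) :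
    ∃ y, (G.deleteVert v).Adj x y := by
  by_contra! hx
  have hx_only_v : ∀ y, G.Adj x y → y = v := fun y hy => by
    by_contra hyv
    exact hx ⟨y, hyv⟩ hy
  obtain ⟨y, hxy⟩ := (G.degree_pos_iff_exists_adj x).mp (hG x)
  have hxv : G.Adj x v := hx_only_v y hxy ▸ hxy
  exact hv ⟨x, hxv.symm, degree_eq_one_iff_existsUnique_adj.mpr ⟨v, hxv, hx_only_v⟩⟩

theorem IsTotalDomSet.map_subtype_of_adj {G : SimpleGraph V} {v : V}
    {S : Finset {x : V // x ≠ v}} (hS : (G.deleteVert v).IsTotalDomSet ↑S)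
    {w : {x : V // x ≠ v}} (hw : w ∈ S) (hvw : G.Adj v w) :
    G.IsTotalDomSet ↑(S.map (Function.Embedding.subtype _)) := by
  intro x
  by_cases hxv : x = v
  · exact ⟨w, Finset.mem_map_of_mem _ hw, hxv ▸ hvw⟩
  · obtain ⟨z, hz, hxz⟩ := hS ⟨x, hxv⟩
    exact ⟨z, Finset.mem_map_of_mem _ hz, hxz⟩

theorem totalDomNum_le_totalDomNum_deleteVert [Fintype V] {G : SimpleGraph V} {u v : V}
    (hG : ∀ x, 0 < G.degree x) (huv : u ≠ v) (hv : ¬ G.IsSupportVertex v)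
    (hsub : G.neighborSet u ⊆ G.neighborSet v) :
    G.totalDomNum ≤ (G.deleteVert v).totalDomNum := by
  obtain ⟨S, hS, hS_card⟩ :=
    exists_isTotalDomSet_card_eq_totalDomNum (exists_adj_deleteVert hG hv)
  obtain ⟨w, hw, huw⟩ := hS ⟨u, huv⟩
  have hvw : G.Adj v w := hsub huw
  calc G.totalDomNum ≤ (S.map (Function.Embedding.subtype _)).card :=
        totalDomNum_le_card (hS.map_subtype_of_adj hw hvw)
    _ = (G.deleteVert v).totalDomNum := by rw [Finset.card_map, hS_card]

theorem stmt5_general {V : Type*} [Fintype V] (G : SimpleGraph V)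
    (u v : V) (huv : u ≠ v)
    (hv : ¬ G.IsSupportVertex v)
    (hsub : G.neighborSet u ⊆ G.neighborSet v) :
    ¬ G.IsTotalDomCritical := by
  rintro ⟨hG, hcrit⟩
  exact (hcrit v hv).not_ge (totalDomNum_le_totalDomNum_deleteVert hG huv hv hsub)

/-- if `G` (with no isolated vertex) has nonadjacent vertices `u` and `v`
with `v` not a support vertex and `N(u) ⊆ N(v)`, then `G` is not `γₜ`-critical. -/
theorem stmt5 {V : Type*} [Fintype V] (G : SimpleGraph V)
    (hiso : ∀ x : V, 0 < G.degree x)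
    (u v : V) (huv : u ≠ v) (hadj : ¬ G.Adj u v)
    (hv : ¬ G.IsSupportVertex v)
    (hsub : G.neighborSet u ⊆ G.neighborSet v) :
    ¬ G.IsTotalDomCritical :=
  stmt5_general G u v huv hv hsub

end SimpleGraph
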